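/- Let ℙ be a shift-invariant probability measure satisfying the upper-decoupling inequality ℙ_{n+m}(ab) ≤ C ℙₙ(a)ℙₘ(b). For ε > 0 define Bₙ,ε := {x : R̂ₙ(x) ≤ exp(−log ℙ̂ₙ(x₁ⁿ) − nε)}. Then ℙ(Bₙ,ε) ≤ C² e^{−nε} for all n, and consequently ∑ₙ ℙ(Bₙ,ε) < ∞ and, by Borel–Cantelli, liminf_{n→∞} (1/n)(log R̂ₙ(x) + log ℙ̂ₙ(x₁ⁿ)) ≥ 0 for ℙ-almost every x. -/

import Mathlib

open MeasureTheory Filter Finset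

variable {𝒜 : Type*}

/-- The left shift on one-sided sequences. -/
def shift : (ℕ → 𝒜) → (ℕ → 𝒜) := fun x n => x (n + 1)

/-- The `n`-prefix of a sequence (0-indexed). -/
def pref (n : ℕ) (x : ℕ → 𝒜) : Fin n → 𝒜 := fun i => x i.val

/-- The cylinder determined by a word. -/
def cyl {n : ℕ} (a : Fin n → 𝒜) : Set (ℕ → 𝒜) := {x | pref n x = a}

/-- The `n`-th marginal of a measure, as a real-valued function on words. -/
noncomputable def marg [MeasurableSpace 𝒜] (P : Measure (ℕ → 𝒜)) (n : ℕ)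
    (a : Fin n → 𝒜) : ℝ := (P (cyl a)).toReal

/-- The reversal of a word with respect to an involution `θ`. -/
def wordRev (θ : 𝒜 → 𝒜) {n : ℕ} (a : Fin n → 𝒜) : Fin n → 𝒜 := fun i => θ (a i.rev)

/-- Shift invariance of a measure. -/
def ShiftInv [MeasurableSpace 𝒜] (P : Measure (ℕ → 𝒜)) : Prop :=
  ∀ s : Set (ℕ → 𝒜), P (shift ⁻¹' s) = P s

/-- The waiting time `Wₙ(x,y)`: first `k ≥ 1` such that `y_k^{k+n−1} = x₁ⁿ`
(0-indexed: `y (k−1+i) = x i` for `i < n`), with value `∞` if no such `k` exists. -/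
noncomputable def waitT (n : ℕ) (x y : ℕ → 𝒜) : ℕ∞ :=
  sInf ((fun k : ℕ => (k : ℕ∞)) ''
    {k : ℕ | 1 ≤ k ∧ ∀ i : Fin n, y (k - 1 + i.val) = x i.val})

/-- The recurrence time `Rₙ(x)`: first `k ≥ 1` such that `x_{n+k}^{n+k+n−1} = x₁ⁿ`. -/
noncomputable def recT (n : ℕ) (x : ℕ → 𝒜) : ℕ∞ :=
  sInf ((fun k : ℕ => (k : ℕ∞)) ''
    {k : ℕ | 1 ≤ k ∧ ∀ i : Fin n, x (n + k - 1 + i.val) = x i.val})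

/-- The reversed recurrence time `R̂ₙ(x)`: first `k ≥ 1` such that
`x_{n+k}^{n+k+n−1} = x̂₁ⁿ`, where `x̂₁ⁿ` is the `θ`-reversal of the `n`-prefix. -/
noncomputable def recRevT (θ : 𝒜 → 𝒜) (n : ℕ) (x : ℕ → 𝒜) : ℕ∞ :=
  sInf ((fun k : ℕ => (k : ℕ∞)) ''
    {k : ℕ | 1 ≤ k ∧ ∀ i : Fin n, x (n + k - 1 + i.val) = wordRev θ (pref n x) i})

/-- `(1/n)(log R̂ₙ(x) + log ℙ̂ₙ(x₁ⁿ))`, valued in `EReal`, equal to `⊤` when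
`R̂ₙ(x) = ∞` (convention `log ∞ = ∞`). -/
noncomputable def recRevLogTerm [Fintype 𝒜] [MeasurableSpace 𝒜] (θ : 𝒜 → 𝒜)
    (P : Measure (ℕ → 𝒜)) (n : ℕ) (x : ℕ → 𝒜) : EReal :=
  if recRevT θ n x = ⊤ then (⊤ : EReal)
  else (((Real.log (WithTop.untopD 0 (recRevT θ n x) : ℕ) +
      Real.log (marg P n (wordRev θ (pref n x)))) / n : ℝ) : EReal)

/-!
A word `a` followed, at distance `j + 1`, by its reversal `â` is the disjoint union over the
gap words `c` of length `j` of the cylinders `[a c â]`. Decoupling twice bounds `ℙ[a c â]` by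
`C² ℙ(a) ℙ(c) ℙ(â)`, and summing over `c` leaves `C² ℙ(a) ℙ(â)`, independently of `j`.
On `Bₙ,ε ∩ [a]` the return time is at most `e^{-nε} / ℙ(â)`, so
`ℙ(Bₙ,ε) ≤ ∑ₐ C² e^{-nε} ℙ(a) = C² e^{-nε}`. This is summable in `n`, so by Borel–Cantelli
a.e. `x` lies in only finitely many `Bₙ,ε`, and off `Bₙ,ε` the normalised log-return term is
at least `-ε`.
-/

lemma mem_cyl {n : ℕ} {a : Fin n → 𝒜} {x : ℕ → 𝒜} : x ∈ cyl a ↔ ∀ i : Fin n, x i = a i := by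
  simp [cyl, pref, funext_iff]

lemma mem_cyl_append {n m : ℕ} {a : Fin n → 𝒜} {b : Fin m → 𝒜} {x : ℕ → 𝒜} :
    x ∈ cyl (Fin.append a b) ↔ x ∈ cyl a ∧ ∀ i : Fin m, x (n + i) = b i := by
  simp [mem_cyl, Fin.forall_fin_add]

lemma marg_nonneg [MeasurableSpace 𝒜] (P : Measure (ℕ → 𝒜)) (n : ℕ) (a : Fin n → 𝒜) :
    0 ≤ marg P n a :=
  measureReal_nonneg

lemma measurable_pref [MeasurableSpace 𝒜] (n : ℕ) :
    Measurable (pref n : (ℕ → 𝒜) → Fin n → 𝒜) :=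
  measurable_pi_lambda _ fun i => measurable_pi_apply i.val

section Marginals

variable [MeasurableSpace 𝒜] [MeasurableSingletonClass 𝒜]

lemma measurableSet_cyl {n : ℕ} (a : Fin n → 𝒜) : MeasurableSet (cyl a) :=
  measurable_pref n (measurableSet_singleton a)

lemma sum_marg_eq_one [Fintype 𝒜] (P : Measure (ℕ → 𝒜)) [IsProbabilityMeasure P] (n : ℕ) :
    ∑ a : Fin n → 𝒜, marg P n a = 1 := by
  change ∑ a, P.real (pref n ⁻¹' {a}) = 1
  simpa using sum_measureReal_preimage_singleton (μ := P) (f := pref n) univ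
    fun a _ => measurableSet_cyl a

end Marginals

section Decoupling

variable [MeasurableSpace 𝒜] {P : Measure (ℕ → 𝒜)} {C : ℝ}

lemma marg_append_append_le (hC : 0 ≤ C)
    (hdec : ∀ (n m : ℕ) (a : Fin n → 𝒜) (b : Fin m → 𝒜),
      marg P (n + m) (Fin.append a b) ≤ C * marg P n a * marg P m b)
    {n j m : ℕ} (a : Fin n → 𝒜) (c : Fin j → 𝒜) (b : Fin m → 𝒜) :
    marg P (n + (j + m)) (Fin.append a (Fin.append c b)) ≤
      C ^ 2 * marg P n a * marg P m b * marg P j c :=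
  calc marg P (n + (j + m)) (Fin.append a (Fin.append c b))
      ≤ C * marg P n a * marg P (j + m) (Fin.append c b) := hdec _ _ _ _
    _ ≤ C * marg P n a * (C * marg P j c * marg P m b) := by
        gcongr
        · exact mul_nonneg hC (marg_nonneg P n a)
        · exact hdec _ _ _ _
    _ = C ^ 2 * marg P n a * marg P m b * marg P j c := by ring

lemma measureReal_cyl_inter_gap_le [Fintype 𝒜] [MeasurableSingletonClass 𝒜]
    [IsProbabilityMeasure P] (hC : 0 ≤ C)
    (hdec : ∀ (n m : ℕ) (a : Fin n → 𝒜) (b : Fin m → 𝒜),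
      marg P (n + m) (Fin.append a b) ≤ C * marg P n a * marg P m b)
    {n m : ℕ} (j : ℕ) (a : Fin n → 𝒜) (b : Fin m → 𝒜) :
    P.real (cyl a ∩ {x | ∀ i : Fin m, x (n + j + i) = b i}) ≤
      C ^ 2 * marg P n a * marg P m b := by
  have hcover : cyl a ∩ {x | ∀ i : Fin m, x (n + j + i) = b i} ⊆
      ⋃ c : Fin j → 𝒜, cyl (Fin.append a (Fin.append c b)) := by
    rintro x ⟨hxa, hxb⟩
    refine Set.mem_iUnion.2 ⟨fun t => x (n + t), ?_⟩
    simp only [mem_cyl_append, Fin.forall_fin_add, Fin.append_left, Fin.append_right,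
      Fin.val_castAdd, Fin.val_natAdd, implies_true, true_and]
    exact ⟨hxa, fun i => by rw [← add_assoc]; exact hxb i⟩
  calc P.real (cyl a ∩ {x | ∀ i : Fin m, x (n + j + i) = b i})
      ≤ ∑ c : Fin j → 𝒜, marg P _ (Fin.append a (Fin.append c b)) :=
        (measureReal_mono hcover).trans (measureReal_iUnion_fintype_le _)
    _ ≤ ∑ c : Fin j → 𝒜, C ^ 2 * marg P n a * marg P m b * marg P j c :=
        sum_le_sum fun c _ => marg_append_append_le hC hdec a c b
    _ = C ^ 2 * marg P n a * marg P m b := by rw [← mul_sum, sum_marg_eq_one, mul_one]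

end Decoupling

lemma natCast_mem_of_sInf_image_eq {T : Set ℕ} {k : ℕ}
    (h : sInf ((fun k : ℕ => (k : ℕ∞)) '' T) = k) : k ∈ T := by
  have hne : ((fun k : ℕ => (k : ℕ∞)) '' T).Nonempty := by
    by_contra hempty
    rw [Set.not_nonempty_iff_eq_empty.1 hempty, sInf_empty] at h
    exact ENat.top_ne_natCast k h
  obtain ⟨k', hk', hk'k⟩ := h ▸ csInf_mem hne
  exact Nat.cast_injective hk'k ▸ hk'

lemma recRevT_eq_natCast {θ : 𝒜 → 𝒜} {n k : ℕ} {x : ℕ → 𝒜} (h : recRevT θ n x = k) :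
    1 ≤ k ∧ ∀ i : Fin n, x (n + k - 1 + i) = wordRev θ (pref n x) i :=
  natCast_mem_of_sInf_image_eq h

lemma natFloor_exp_neg_log_sub_mul_le {p : ℝ} (hp : 0 ≤ p) (t : ℝ) :
    (⌊Real.exp (-Real.log p - t)⌋₊ : ℝ) * p ≤ Real.exp (-t) := by
  rcases hp.eq_or_lt with rfl | hp
  · simpa using (Real.exp_pos _).le
  calc (⌊Real.exp (-Real.log p - t)⌋₊ : ℝ) * p ≤ Real.exp (-Real.log p - t) * p := by
        gcongr
        exact Nat.floor_le (Real.exp_pos _).le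
    _ = Real.exp (-t) := by
        rw [sub_eq_neg_add, Real.exp_add, Real.exp_neg (Real.log p), Real.exp_log hp]
        field_simp

lemma ae_eventually_notMem_of_summable_measureReal {α : Type*} [MeasurableSpace α]
    {μ : Measure α} [IsFiniteMeasure μ] {s : ℕ → Set α} (hs : Summable fun n => μ.real (s n)) :
    ∀ᵐ x ∂μ, ∀ᶠ n in atTop, x ∉ s n :=
  ae_eventually_notMem <| by
    simpa [measureReal_def, ENNReal.ofReal_toReal (measure_ne_top μ _)] using
      hs.tsum_ofReal_ne_top

section EarlyReturns

variable [MeasurableSpace 𝒜] {P : Measure (ℕ → 𝒜)} {C : ℝ}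

/-- The set `Bₙ,ε`. -/
def earlyRecRevSet (θ : 𝒜 → 𝒜) (P : Measure (ℕ → 𝒜)) (n : ℕ) (ε : ℝ) : Set (ℕ → 𝒜) :=
  {x | ∃ k : ℕ, recRevT θ n x = (k : ℕ∞) ∧
    (k : ℝ) ≤ Real.exp (-Real.log (marg P n (wordRev θ (pref n x))) - n * ε)}

lemma earlyRecRevSet_subset (θ : 𝒜 → 𝒜) (P : Measure (ℕ → 𝒜)) (n : ℕ) (ε : ℝ) :
    earlyRecRevSet θ P n ε ⊆ ⋃ a : Fin n → 𝒜,
      ⋃ j ∈ Finset.range ⌊Real.exp (-Real.log (marg P n (wordRev θ a)) - n * ε)⌋₊,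
        cyl a ∩ {x | ∀ i : Fin n, x (n + j + i) = wordRev θ a i} := by
  rintro x ⟨k, hk, hle⟩
  obtain ⟨hk1, hreturn⟩ := recRevT_eq_natCast hk
  simp only [Set.mem_iUnion, Finset.mem_range]
  refine ⟨pref n x, k - 1, ?_, rfl, fun i => ?_⟩
  · have := Nat.le_floor hle
    omega
  · rw [show n + (k - 1) = n + k - 1 by omega]
    exact hreturn i

lemma measureReal_earlyRecRevSet_le [Fintype 𝒜] [MeasurableSingletonClass 𝒜]
    [IsProbabilityMeasure P] (hC : 0 ≤ C)
    (hdec : ∀ (n m : ℕ) (a : Fin n → 𝒜) (b : Fin m → 𝒜),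
      marg P (n + m) (Fin.append a b) ≤ C * marg P n a * marg P m b)
    (θ : 𝒜 → 𝒜) (n : ℕ) (ε : ℝ) :
    P.real (earlyRecRevSet θ P n ε) ≤ C ^ 2 * Real.exp (-(n * ε)) := by
  set K : (Fin n → 𝒜) → ℕ :=
    fun a => ⌊Real.exp (-Real.log (marg P n (wordRev θ a)) - n * ε)⌋₊
  calc P.real (earlyRecRevSet θ P n ε)
      ≤ ∑ a, ∑ j ∈ Finset.range (K a),
          P.real (cyl a ∩ {x | ∀ i : Fin n, x (n + j + i) = wordRev θ a i}) :=
        (measureReal_mono (earlyRecRevSet_subset θ P n ε)).trans <|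
          (measureReal_iUnion_fintype_le _).trans <|
            sum_le_sum fun a _ => measureReal_biUnion_finset_le _ _
    _ ≤ ∑ a, K a * (C ^ 2 * marg P n a * marg P n (wordRev θ a)) :=
        sum_le_sum fun a _ => (sum_le_sum fun j _ =>
          measureReal_cyl_inter_gap_le hC hdec j a (wordRev θ a)).trans_eq (by simp)
    _ ≤ ∑ a, C ^ 2 * Real.exp (-(n * ε)) * marg P n a := by
        refine sum_le_sum fun a _ => ?_
        calc (K a : ℝ) * (C ^ 2 * marg P n a * marg P n (wordRev θ a))
            = C ^ 2 * marg P n a * (K a * marg P n (wordRev θ a)) := by ring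
          _ ≤ C ^ 2 * marg P n a * Real.exp (-(n * ε)) := by
              gcongr
              · exact mul_nonneg (sq_nonneg C) (marg_nonneg P n a)
              · exact natFloor_exp_neg_log_sub_mul_le (marg_nonneg P n _) _
          _ = C ^ 2 * Real.exp (-(n * ε)) * marg P n a := by ring
    _ = C ^ 2 * Real.exp (-(n * ε)) := by rw [← mul_sum, sum_marg_eq_one, mul_one]

lemma summable_measureReal_earlyRecRevSet [Fintype 𝒜] [MeasurableSingletonClass 𝒜]
    [IsProbabilityMeasure P] (hC : 0 ≤ C)
    (hdec : ∀ (n m : ℕ) (a : Fin n → 𝒜) (b : Fin m → 𝒜),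
      marg P (n + m) (Fin.append a b) ≤ C * marg P n a * marg P m b)
    (θ : 𝒜 → 𝒜) {ε : ℝ} (hε : 0 < ε) :
    Summable fun n => P.real (earlyRecRevSet θ P n ε) := by
  have hgeom : Summable fun n : ℕ => C ^ 2 * Real.exp (-(n * ε)) := by
    simpa only [mul_neg] using (Real.summable_exp_nat_mul_iff.2 (neg_lt_zero.2 hε)).mul_left _
  exact hgeom.of_nonneg_of_le (fun n => measureReal_nonneg)
    fun n => measureReal_earlyRecRevSet_le hC hdec θ n ε

lemma neg_le_recRevLogTerm_of_notMem [Fintype 𝒜] {θ : 𝒜 → 𝒜} {n : ℕ} {ε : ℝ} {x : ℕ → 𝒜}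
    (hn : n ≠ 0) (hx : x ∉ earlyRecRevSet θ P n ε) :
    ((-ε : ℝ) : EReal) ≤ recRevLogTerm θ P n x := by
  rw [recRevLogTerm]
  split_ifs with htop
  · exact le_top
  obtain ⟨k, hk⟩ := WithTop.ne_top_iff_exists.1 htop
  have hk1 : (1 : ℝ) ≤ k := by exact_mod_cast (recRevT_eq_natCast hk.symm).1
  have hlt : Real.exp (-Real.log (marg P n (wordRev θ (pref n x))) - n * ε) < k :=
    not_le.1 fun hle => hx ⟨k, hk.symm, hle⟩
  have hlog := (Real.lt_log_iff_exp_lt (by linarith)).2 hlt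
  rw [← hk, EReal.coe_le_coe_iff, le_div_iff₀ (by positivity)]
  simp only [WithTop.untopD_coe]
  linarith

end EarlyReturns

theorem recRev_lower_estimate_general [Fintype 𝒜] [MeasurableSpace 𝒜] [MeasurableSingletonClass 𝒜]
    (θ : 𝒜 → 𝒜)
    (P : Measure (ℕ → 𝒜)) [IsProbabilityMeasure P]
    (C : ℝ) (hC : 1 ≤ C)
    (hdec : ∀ (n m : ℕ) (a : Fin n → 𝒜) (b : Fin m → 𝒜),
      marg P (n + m) (Fin.append a b) ≤ C * marg P n a * marg P m b)
    :
    (∀ ε : ℝ, 0 < ε → ∀ n : ℕ,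
      (P {x | ∃ k : ℕ, recRevT θ n x = (k : ℕ∞) ∧
          (k : ℝ) ≤ Real.exp (-Real.log (marg P n (wordRev θ (pref n x))) - n * ε)}).toReal ≤
        C ^ 2 * Real.exp (-(n * ε))) ∧
    (∀ ε : ℝ, 0 < ε → Summable (fun n : ℕ =>
      (P {x | ∃ k : ℕ, recRevT θ n x = (k : ℕ∞) ∧
          (k : ℝ) ≤ Real.exp (-Real.log (marg P n (wordRev θ (pref n x))) - n * ε)}).toReal)) ∧
    (∀ᵐ x ∂P, 0 ≤ Filter.liminf (fun n : ℕ => recRevLogTerm θ P n x) atTop) := by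
  have hC0 : 0 ≤ C := zero_le_one.trans hC
  refine ⟨fun ε _ n => measureReal_earlyRecRevSet_le hC0 hdec θ n ε,
    fun ε hε => summable_measureReal_earlyRecRevSet hC0 hdec θ hε, ?_⟩
  have hfinite : ∀ m : ℕ, ∀ᵐ x ∂P, ∀ᶠ n in atTop, x ∉ earlyRecRevSet θ P n (1 / (m + 1)) :=
    fun m => ae_eventually_notMem_of_summable_measureReal <|
      summable_measureReal_earlyRecRevSet hC0 hdec θ (by positivity)
  filter_upwards [ae_all_iff.2 hfinite] with x hx
  have hlim : Tendsto (fun m : ℕ => ((-(1 / ((m : ℝ) + 1)) : ℝ) : EReal)) atTop (nhds 0) := by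
    simpa using EReal.tendsto_coe.2 tendsto_one_div_add_atTop_nhds_zero_nat.neg
  refine le_of_tendsto' hlim fun m => le_liminf_of_le (by isBoundedDefault) ?_
  filter_upwards [hx m, eventually_ne_atTop 0] with n hnotMem hn
  exact neg_le_recRevLogTerm_of_notMem hn hnotMem

/-- Under upper decoupling, with
`Bₙ,ε := {x : R̂ₙ(x) ≤ exp(−log ℙ̂ₙ(x₁ⁿ) − nε)}`, one has `ℙ(Bₙ,ε) ≤ C² e^{−nε}`, the
series `∑ₙ ℙ(Bₙ,ε)` converges, and by Borel–Cantelli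
`liminf (1/n)(log R̂ₙ + log ℙ̂ₙ(x₁ⁿ)) ≥ 0` for `ℙ`-a.e. `x`. -/
theorem recRev_lower_estimate [Fintype 𝒜] [MeasurableSpace 𝒜] [MeasurableSingletonClass 𝒜]
    (θ : 𝒜 → 𝒜) (hθ : Function.Involutive θ)
    (P : Measure (ℕ → 𝒜)) [IsProbabilityMeasure P] (hinv : ShiftInv P)
    (C : ℝ) (hC : 1 ≤ C)
    (hdec : ∀ (n m : ℕ) (a : Fin n → 𝒜) (b : Fin m → 𝒜),
      marg P (n + m) (Fin.append a b) ≤ C * marg P n a * marg P m b)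
    :
    (∀ ε : ℝ, 0 < ε → ∀ n : ℕ,
      (P {x | ∃ k : ℕ, recRevT θ n x = (k : ℕ∞) ∧
          (k : ℝ) ≤ Real.exp (-Real.log (marg P n (wordRev θ (pref n x))) - n * ε)}).toReal ≤
        C ^ 2 * Real.exp (-(n * ε))) ∧
    (∀ ε : ℝ, 0 < ε → Summable (fun n : ℕ =>
      (P {x | ∃ k : ℕ, recRevT θ n x = (k : ℕ∞) ∧
          (k : ℝ) ≤ Real.exp (-Real.log (marg P n (wordRev θ (pref n x))) - n * ε)}).toReal)) ∧
    (∀ᵐ x ∂P, 0 ≤ Filter.liminf (fun n : ℕ => recRevLogTerm θ P n x) atTop) :=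
  recRev_lower_estimate_general θ P C hC hdec
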